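/- For the pentagon UPB state ρ (the normalized projector onto the orthogonal complement of span{|p_i⟩ = |v_i⟩⊗|v_{2i mod 5}⟩} in C³⊗C³) and the maximally entangled state |Ψ⁺⟩ = (1/√3)(|00⟩+|11⟩+|22⟩), one has ⟨Ψ⁺|ρ|Ψ⁺⟩ = (1/4)(1 − (7+√5)/(3(3+√5))) > 0. -/

import Mathlib

open scoped BigOperators ComplexConjugate

noncomputable section

def inC {ι : Type*} [Fintype ι] (x y : ι → ℂ) : ℂ := ∑ i, conj (x i) * y i

def prodVec {ι κ : Type*} (a : ι → ℂ) (b : κ → ℂ) : ι × κ → ℂ := fun p => a p.1 * b p.2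

def outer {ι : Type*} (x : ι → ℂ) : Matrix ι ι ℂ := Matrix.vecMulVec x (star x)

def h5 : ℝ := (1 / 2) * Real.sqrt (1 + Real.sqrt 5)

def N5 : ℝ := 2 / Real.sqrt (5 + Real.sqrt 5)

def v (i : Fin 5) : Fin 3 → ℂ :=
  ![((N5 * Real.cos (2 * Real.pi * (i : ℕ) / 5) : ℝ) : ℂ),
    ((N5 * Real.sin (2 * Real.pi * (i : ℕ) / 5) : ℝ) : ℂ),
    ((N5 * h5 : ℝ) : ℂ)]

/-- The pentagon UPB state: normalized projector onto the complement of the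
span of the `|p_i⟩ = |v_i⟩ ⊗ |v_{2i mod 5}⟩`. -/
def ρpent : Matrix (Fin 3 × Fin 3) (Fin 3 × Fin 3) ℂ :=
  (4 : ℂ)⁻¹ • (1 - ∑ i : Fin 5, outer (prodVec (v i) (v (2 * i))))

/-- The maximally entangled state `|Ψ⁺⟩ = (1/√3)(|00⟩+|11⟩+|22⟩)`. -/
def ψplus3 : Fin 3 × Fin 3 → ℂ :=
  fun p => if p.1 = p.2 then ((Real.sqrt 3 : ℝ) : ℂ)⁻¹ else 0

/-! `Ψ⁺` is a unit vector, so `⟨Ψ⁺|ρ|Ψ⁺⟩ = (1 - ∑ |⟨p_i|Ψ⁺⟩|²) / 4`. For real vectors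
`⟨a ⊗ b|Ψ⁺⟩ = ⟨a, b⟩ / √3`, and the Gram entries of the pentagon vectors depend only on the
angle difference: `1` on the diagonal, `(√5 - 1)/2` for neighbours and `0` for next neighbours.
The pairs `(i, 2i)` realise the differences `0`, `±2π/5` (twice) and `±4π/5` (twice), so the
sum is `(1 + 2 ((√5 - 1)/2)²) / 3 = (4 - √5) / 3`. -/

open Matrix Real

lemma inC_eq_star_dotProduct {ι : Type*} [Fintype ι] (x y : ι → ℂ) : inC x y = star x ⬝ᵥ y :=
  rfl

lemma conj_inC {ι : Type*} [Fintype ι] (x y : ι → ℂ) : conj (inC x y) = inC y x := by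
  simp [inC, mul_comm]

lemma inC_outer_mulVec {ι : Type*} [Fintype ι] (p x : ι → ℂ) :
    inC x (outer p *ᵥ x) = Complex.normSq (inC p x) := by
  rw [Complex.normSq_eq_conj_mul_self, conj_inC, outer, vecMulVec_mulVec,
    inC_eq_star_dotProduct, dotProduct_smul]
  rfl

lemma inC_smul_one_sub_sum_outer_mulVec {ι κ : Type*} [Fintype ι] [DecidableEq ι] [Fintype κ]
    (c : ℂ) (p : κ → ι → ℂ) (x : ι → ℂ) :
    inC x ((c • (1 - ∑ k, outer (p k))) *ᵥ x) =
      c * (inC x x - ∑ k, (Complex.normSq (inC (p k) x) : ℂ)) := by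
  rw [inC_eq_star_dotProduct]
  simp only [smul_mulVec, sub_mulVec, one_mulVec, sum_mulVec, dotProduct_smul, dotProduct_sub,
    dotProduct_sum, ← inC_eq_star_dotProduct, inC_outer_mulVec, smul_eq_mul]

lemma inC_ψplus3_self : inC ψplus3 ψplus3 = 1 := by
  have hs3 : ((√3 : ℝ) : ℂ) ^ 2 = 3 := by
    rw [← Complex.ofReal_pow, sq_sqrt (by norm_num)]; norm_num
  simp [inC, ψplus3, Fintype.sum_prod_type, ← sq, inv_pow, hs3]

lemma inC_prodVec_ψplus3 (a b : Fin 3 → ℂ) :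
    inC (prodVec a b) ψplus3 = conj (∑ k, a k * b k) * ((√3 : ℝ) : ℂ)⁻¹ := by
  simp [inC, prodVec, ψplus3, Fintype.sum_prod_type, Finset.sum_mul]

def pentAngle (i : Fin 5) : ℝ := 2 * π * (i : ℕ) / 5

/-- The Gram entry `⟨v_i, v_j⟩` as a function of `θ = pentAngle i - pentAngle j`. -/
def pentGram (θ : ℝ) : ℝ := N5 ^ 2 * (cos θ + h5 ^ 2)

lemma sum_v_mul_v (i j : Fin 5) :
    ∑ k, v i k * v j k = (pentGram (pentAngle i - pentAngle j) : ℂ) := by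
  simp [Fin.sum_univ_three, v, pentGram, pentAngle, cos_sub]
  ring

lemma inC_prodVec_v_ψplus3 (i j : Fin 5) :
    inC (prodVec (v i) (v j)) ψplus3 = (pentGram (pentAngle i - pentAngle j) / √3 : ℝ) := by
  rw [inC_prodVec_ψplus3, sum_v_mul_v, Complex.conj_ofReal]
  push_cast
  rfl

lemma N5_sq : N5 ^ 2 = 4 / (5 + √5) := by
  rw [N5, div_pow, sq_sqrt (by positivity)]
  norm_num

lemma h5_sq : h5 ^ 2 = (1 + √5) / 4 := by
  rw [h5, mul_pow, sq_sqrt (by positivity)]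
  ring

lemma cos_two_pi_div_five : cos (2 * π / 5) = (√5 - 1) / 4 := by
  have hs5 : √5 ^ 2 = 5 := sq_sqrt (by norm_num)
  rw [show 2 * π / 5 = 2 * (π / 5) by ring, cos_two_mul, cos_pi_div_five]
  linear_combination hs5 / 8

lemma cos_four_pi_div_five : cos (4 * π / 5) = -(1 + √5) / 4 := by
  rw [show 4 * π / 5 = π - π / 5 by ring, cos_pi_sub, cos_pi_div_five, neg_div]

lemma pentGram_neg (θ : ℝ) : pentGram (-θ) = pentGram θ := by
  rw [pentGram, pentGram, cos_neg]

lemma pentGram_zero : pentGram 0 = 1 := by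
  have : 5 + √5 ≠ 0 := by positivity
  rw [pentGram, cos_zero, N5_sq, h5_sq]
  field_simp
  ring

lemma pentGram_two_pi_div_five : pentGram (2 * π / 5) = (√5 - 1) / 2 := by
  have hs5 : √5 ^ 2 = 5 := sq_sqrt (by norm_num)
  have : 5 + √5 ≠ 0 := by positivity
  rw [pentGram, cos_two_pi_div_five, N5_sq, h5_sq]
  field_simp
  linear_combination (-1) * hs5

lemma pentGram_four_pi_div_five : pentGram (4 * π / 5) = 0 := by
  rw [pentGram, cos_four_pi_div_five, h5_sq]
  ring

lemma sum_normSq_inC_pentagon_ψplus3 :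
    ∑ i : Fin 5, Complex.normSq (inC (prodVec (v i) (v (2 * i))) ψplus3) = (4 - √5) / 3 := by
  have hs5 : √5 ^ 2 = 5 := sq_sqrt (by norm_num)
  have hs3 : √3 ^ 2 = 3 := sq_sqrt (by norm_num)
  have e0 : pentAngle 0 - pentAngle (2 * 0) = 0 := by simp [pentAngle]
  have e1 : pentAngle 1 - pentAngle (2 * 1) = -(2 * π / 5) := by simp [pentAngle]; ring
  have e2 : pentAngle 2 - pentAngle (2 * 2) = -(4 * π / 5) := by simp [pentAngle]; ring
  have e3 : pentAngle 3 - pentAngle (2 * 3) = 4 * π / 5 := by simp [pentAngle]; ring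
  have e4 : pentAngle 4 - pentAngle (2 * 4) = 2 * π / 5 := by simp [pentAngle]; ring
  simp only [inC_prodVec_v_ψplus3, Complex.normSq_ofReal, Fin.sum_univ_five, e0, e1, e2, e3, e4,
    pentGram_neg, pentGram_zero, pentGram_two_pi_div_five, pentGram_four_pi_div_five]
  field_simp
  linear_combination 6 * hs5 - 4 * (4 - √5) * hs3

lemma seven_add_sqrt_five_div : (7 + √5) / (3 * (3 + √5)) = (4 - √5) / 3 := by
  have hs5 : √5 ^ 2 = 5 := sq_sqrt (by norm_num)
  have : 3 + √5 ≠ 0 := by positivity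
  field_simp
  linear_combination hs5

/-- `⟨Ψ⁺|ρ|Ψ⁺⟩ = (1/4)(1 − (7+√5)/(3(3+√5))) > 0` for the
pentagon UPB state. -/
theorem pentagon_overlap_value :
    inC ψplus3 (ρpent.mulVec ψplus3) =
      (((1 / 4) * (1 - (7 + Real.sqrt 5) / (3 * (3 + Real.sqrt 5))) : ℝ) : ℂ) ∧
    0 < (1 / 4 : ℝ) * (1 - (7 + Real.sqrt 5) / (3 * (3 + Real.sqrt 5))) := by
  rw [seven_add_sqrt_five_div]
  constructor
  · rw [ρpent, inC_smul_one_sub_sum_outer_mulVec, inC_ψplus3_self, ← Complex.ofReal_sum,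
      sum_normSq_inC_pentagon_ψplus3]
    push_cast
    ring
  · have : 1 < √5 := by rw [lt_sqrt zero_le_one]; norm_num
    linarith
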